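/- Let X be an n×p matrix with rows x₁ᵀ,…,x_nᵀ, y ∈ ℝ^n, and let θ̂ = X†y be the minimum-norm least squares solution, with hat matrix H = XX† and residuals ê_i = y_i − x_iᵀθ̂. Let θ̂^{(−i)} be the minimum-norm least squares solution with the i-th row deleted. If h_i = H_{ii} < 1, then x_iᵀ(θ̂ − θ̂^{(−i)}) = h_i ê_i / (1 − h_i). -/
import Mathlib

open Matrix

/-- `Xd` satisfies the four Penrose conditions for being the Moore–Penrose
pseudoinverse of `X`. -/
def IsMoorePenrose {m n : Type*} [Fintype m] [Fintype n]
    (X : Matrix m n ℝ) (Xd : Matrix n m ℝ) : Prop :=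
  X * Xd * X = X ∧ Xd * X * Xd = Xd ∧ (X * Xd)ᵀ = X * Xd ∧ (Xd * X)ᵀ = Xd * X

/-- Leave-one-out identity for minimum-norm least squares: with `θ̂ = X†y`,
hat matrix `H = XX†`, residual `ê_i = y_i − x_iᵀθ̂`, and `θ̂^{(−i)}` the minimum-norm
least-squares solution with the `i`-th row deleted, if `h_i = H_{ii} < 1` then
`x_iᵀ(θ̂ − θ̂^{(−i)}) = h_i ê_i / (1 − h_i)`. -/
theorem loo_coefficient_identity {n p : ℕ}
    (X : Matrix (Fin n) (Fin p) ℝ) (y : Fin n → ℝ) (i : Fin n)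
    (Xd : Matrix (Fin p) (Fin n) ℝ) (hXd : IsMoorePenrose X Xd)
    (Xdel : Matrix {j : Fin n // j ≠ i} (Fin p) ℝ)
    (hXdel : ∀ (j : {j : Fin n // j ≠ i}) (k : Fin p), Xdel j k = X j.1 k)
    (Xdeld : Matrix (Fin p) {j : Fin n // j ≠ i} ℝ)
    (hXdeld : IsMoorePenrose Xdel Xdeld)
    (hlev : (X * Xd) i i < 1) :
    X i ⬝ᵥ (Xd *ᵥ y - Xdeld *ᵥ (fun j => y j.1))
      = (X * Xd) i i * (y i - X i ⬝ᵥ (Xd *ᵥ y)) / (1 - (X * Xd) i i) := by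
  obtain ⟨h1, h2, h3, h4⟩ := hXd
  obtain ⟨g1, g2, g3, g4⟩ := hXdeld
  set y' : {j : Fin n // j ≠ i} → ℝ := fun j => y j.1 with hy'
  set θ : Fin p → ℝ := Xd *ᵥ y with hθ
  set θ' : Fin p → ℝ := Xdeld *ᵥ y' with hθ'
  set hl : ℝ := (X * Xd) i i with hhl
  -- splitting a sum over `Fin n` at `i`
  have hsplit : ∀ f : Fin n → ℝ,
      ∑ j : Fin n, f j = f i + ∑ j : {j : Fin n // j ≠ i}, f j.1 := by
    intro f
    rw [← Finset.sum_subtype (Finset.univ.erase i) (fun x => by simp) f]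
    exact (Finset.add_sum_erase _ f (Finset.mem_univ i)).symm
  -- normal equation matrices
  have M1 : Xᵀ * X * Xd = Xᵀ := by
    have h' : (X * Xd * X)ᵀ = Xᵀ := by rw [h1]
    rw [transpose_mul, h3] at h'
    rw [Matrix.mul_assoc]; exact h'
  have M2 : Xdelᵀ * Xdel * Xdeld = Xdelᵀ := by
    have h' : (Xdel * Xdeld * Xdel)ᵀ = Xdelᵀ := by rw [g1]
    rw [transpose_mul, g3] at h'
    rw [Matrix.mul_assoc]; exact h'
  -- rows of `Xdel` are fixed by the projection `Xd * X`
  have hXdelfix : Xdel * (Xd * X) = Xdel := by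
    ext j k
    have hjk : (X * (Xd * X)) j.1 k = X j.1 k := by rw [← Matrix.mul_assoc, h1]
    simp only [Matrix.mul_apply] at hjk ⊢
    simpa only [hXdel] using hjk
  have e1 : Xd * X * Xdelᵀ = Xdelᵀ := by
    have h' := congrArg Matrix.transpose hXdelfix
    rwa [transpose_mul, h4] at h'
  have e2 : Xdeld = Xdelᵀ * (Xdeldᵀ * Xdeld) := by
    calc Xdeld = Xdeld * Xdel * Xdeld := g2.symm
      _ = (Xdeld * Xdel)ᵀ * Xdeld := by rw [g4]
      _ = (Xdelᵀ * Xdeldᵀ) * Xdeld := by rw [transpose_mul]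
      _ = Xdelᵀ * (Xdeldᵀ * Xdeld) := Matrix.mul_assoc _ _ _
  have step5 : Xd * X * Xdeld = Xdeld := by
    calc Xd * X * Xdeld = Xd * X * (Xdelᵀ * (Xdeldᵀ * Xdeld)) := by rw [← e2]
      _ = Xd * X * Xdelᵀ * (Xdeldᵀ * Xdeld) := (Matrix.mul_assoc _ _ _).symm
      _ = Xdelᵀ * (Xdeldᵀ * Xdeld) := by rw [e1]
      _ = Xdeld := e2.symm
  -- projection fixes θ - θ'
  have L2 : (Xd * X) *ᵥ (θ - θ') = θ - θ' := by
    rw [mulVec_sub, hθ, hθ', mulVec_mulVec, mulVec_mulVec, h2, step5]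
  have ht : Xdᵀ * Xᵀ = X * Xd := by rw [← transpose_mul, h3]
  have M3 : Xd * Xdᵀ * (Xᵀ * X) = Xd * X := by
    calc Xd * Xdᵀ * (Xᵀ * X) = Xd * (Xdᵀ * (Xᵀ * X)) := Matrix.mul_assoc _ _ _
      _ = Xd * ((Xdᵀ * Xᵀ) * X) := by rw [Matrix.mul_assoc Xdᵀ Xᵀ X]
      _ = Xd * (X * Xd * X) := by rw [ht]
      _ = Xd * X := by rw [h1]
  have M4 : X * (Xd * Xdᵀ) * Xᵀ = X * Xd := by
    calc X * (Xd * Xdᵀ) * Xᵀ = X * (Xd * (Xdᵀ * Xᵀ)) := by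
          rw [Matrix.mul_assoc, Matrix.mul_assoc]
      _ = X * (Xd * (X * Xd)) := by rw [ht]
      _ = X * Xd * (X * Xd) := (Matrix.mul_assoc _ _ _).symm
      _ = X * Xd * X * Xd := (Matrix.mul_assoc _ _ _).symm
      _ = X * Xd := by rw [h1]
  -- leverage as a quadratic form
  have L3 : X i ⬝ᵥ ((Xd * Xdᵀ) *ᵥ X i) = hl := by
    have key : X i ⬝ᵥ ((Xd * Xdᵀ) *ᵥ X i) = (X * (Xd * Xdᵀ) * Xᵀ) i i := by
      simp only [dotProduct, mulVec, Matrix.mul_apply, transpose_apply,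
        Finset.sum_mul, Finset.mul_sum]
      rw [Finset.sum_comm]
      exact Finset.sum_congr rfl fun k _ => Finset.sum_congr rfl fun l _ =>
        Finset.sum_congr rfl fun x _ => by ring
    rw [key, M4, hhl]
  -- normal equations
  have hNθ : Xᵀ *ᵥ (X *ᵥ θ) = Xᵀ *ᵥ y := by
    rw [hθ, mulVec_mulVec, mulVec_mulVec, M1]
  have hNθ' : (Xdelᵀ * Xdel) *ᵥ θ' = Xdelᵀ *ᵥ y' := by
    rw [hθ', mulVec_mulVec, M2]
  have hA : ∀ k l, (Xᵀ * X) k l = X i k * X i l + (Xdelᵀ * Xdel) k l := by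
    intro k l
    simp only [Matrix.mul_apply, transpose_apply, hXdel]
    exact hsplit (fun j => X j k * X j l)
  have hb : ∀ k, (Xᵀ *ᵥ y) k = X i k * y i + (Xdelᵀ *ᵥ y') k := by
    intro k
    simp only [mulVec, dotProduct, transpose_apply, hXdel, hy']
    exact hsplit (fun j => X j k * y j)
  set c : ℝ := y i - X i ⬝ᵥ θ' with hc
  have t2 : ∀ k, (Xᵀ *ᵥ (X *ᵥ θ')) k = X i k * (X i ⬝ᵥ θ') + (Xdelᵀ *ᵥ y') k := by
    intro k
    rw [mulVec_mulVec]
    calc ((Xᵀ * X) *ᵥ θ') k = ∑ l, (Xᵀ * X) k l * θ' l := rfl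
      _ = ∑ l, (X i k * (X i l * θ' l) + (Xdelᵀ * Xdel) k l * θ' l) :=
          Finset.sum_congr rfl fun l _ => by rw [hA k l]; ring
      _ = X i k * (∑ l, X i l * θ' l) + ∑ l, (Xdelᵀ * Xdel) k l * θ' l := by
          rw [Finset.sum_add_distrib, Finset.mul_sum]
      _ = X i k * (X i ⬝ᵥ θ') + ((Xdelᵀ * Xdel) *ᵥ θ') k := rfl
      _ = X i k * (X i ⬝ᵥ θ') + (Xdelᵀ *ᵥ y') k := by rw [hNθ']
  have L1 : Xᵀ *ᵥ (X *ᵥ (θ - θ')) = c • X i := by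
    funext k
    have h5 := congrFun hNθ k
    rw [mulVec_sub, mulVec_sub]
    simp only [Pi.sub_apply, Pi.smul_apply, smul_eq_mul]
    rw [h5, t2 k, hb k, hc]
    ring
  have key : X i ⬝ᵥ (θ - θ') = hl * c := by
    calc X i ⬝ᵥ (θ - θ') = X i ⬝ᵥ ((Xd * X) *ᵥ (θ - θ')) := by rw [L2]
      _ = X i ⬝ᵥ ((Xd * Xdᵀ * (Xᵀ * X)) *ᵥ (θ - θ')) := by rw [M3]
      _ = X i ⬝ᵥ ((Xd * Xdᵀ) *ᵥ (Xᵀ *ᵥ (X *ᵥ (θ - θ')))) := by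
          rw [mulVec_mulVec, mulVec_mulVec, Matrix.mul_assoc (Xd * Xdᵀ) Xᵀ X]
      _ = X i ⬝ᵥ ((Xd * Xdᵀ) *ᵥ (c • X i)) := by rw [L1]
      _ = c * (X i ⬝ᵥ ((Xd * Xdᵀ) *ᵥ X i)) := by
          rw [mulVec_smul, dotProduct_smul, smul_eq_mul]
      _ = c * hl := by rw [L3]
      _ = hl * c := mul_comm _ _
  have hne : (1 : ℝ) - hl ≠ 0 := by
    have : (0:ℝ) < 1 - hl := by linarith
    linarith
  rw [eq_div_iff hne]
  have hd : X i ⬝ᵥ (θ - θ') = X i ⬝ᵥ θ - X i ⬝ᵥ θ' := dotProduct_sub _ _ _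
  have key' : X i ⬝ᵥ θ - X i ⬝ᵥ θ' = hl * (y i - X i ⬝ᵥ θ') := by
    rw [← hd, key, hc]
  rw [hd]
  linear_combination key'
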